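/- arXiv:1112.4691 — 5 statements merged into one kernel-verified Lean document; each statement's English description precedes it below -/
import Mathlib

section
/- The density of square-free numbers exists and equals 6/π²: as N → ∞, (1/N)·#{n : 1 ≤ n ≤ N, n is square-free} tends to 6/π². -/
/-!
Write `n = b²a` with `a` squarefree: then `d² ∣ n` exactly when `d ∣ b`, so `∑_{d² ∣ n} μ(d)`
is `1` if `b = 1`, i.e. if `n` is squarefree, and `0` otherwise. Summing over `n ≤ N` and swapping
the sums gives `#{n ≤ N squarefree} / N = ∑_d μ(d) ⌊N/d²⌋ / N`. Each term tends to `μ(d)/d²` and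
is bounded by `1/d²`, so by Tannery's theorem the limit is `∑_d μ(d)/d² = 1/ζ(2) = 6/π²`.
-/

open Filter Finset ArithmeticFunction
open scoped ArithmeticFunction.Moebius Topology

lemma ArithmeticFunction.LSeries_moebius_eq_inv_riemannZeta {s : ℂ} (hs : 1 < s.re) :
    LSeries (fun n ↦ (μ n : ℂ)) s = (riemannZeta s)⁻¹ := by
  rw [← LSeries_one_eq_riemannZeta hs]
  exact eq_inv_of_mul_eq_one_right (LSeries_one_mul_Lseries_moebius hs)

lemma hasSum_moebius_div_sq :
    HasSum (fun d : ℕ ↦ (μ d : ℝ) / (d : ℝ) ^ 2) (6 / Real.pi ^ 2) := by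
  have hs : 1 < (2 : ℂ).re := by norm_num
  have h := (LSeriesSummable_moebius_iff.mpr hs).LSeriesHasSum
  rw [LSeries_moebius_eq_inv_riemannZeta hs, riemannZeta_two] at h
  have hterm : LSeries.term (fun n ↦ (μ n : ℂ)) 2 =
      fun d ↦ (((μ d : ℝ) / (d : ℝ) ^ 2 : ℝ) : ℂ) := by
    ext d
    rcases eq_or_ne d 0 with rfl | hd
    · simp
    · rw [LSeries.term_of_ne_zero hd, ← Nat.cast_ofNat, Complex.cpow_natCast]
      push_cast
      rfl
  rw [LSeriesHasSum, hterm, inv_div] at h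
  exact_mod_cast Complex.hasSum_ofReal.mp (by exact_mod_cast h)

lemma Nat.sq_dvd_sq_mul_iff_of_squarefree {a b d : ℕ} (ha : Squarefree a) :
    d ^ 2 ∣ b ^ 2 * a ↔ d ∣ b := by
  refine ⟨fun h ↦ ?_, fun h ↦ (pow_dvd_pow_of_dvd h 2).mul_right a⟩
  rcases eq_or_ne b 0 with rfl | hb
  · exact dvd_zero d
  have hd : d ≠ 0 := by rintro rfl; simp_all
  have ha0 : a ≠ 0 := ha.ne_zero
  rw [← Nat.factorization_le_iff_dvd hd hb]
  intro p
  have hp := (Nat.factorization_le_iff_dvd (by positivity) (by positivity)).mpr h p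
  simp only [Nat.factorization_mul (pow_ne_zero 2 hb) ha0, Nat.factorization_pow,
    Finsupp.add_apply, Finsupp.smul_apply, smul_eq_mul] at hp
  have := ha.natFactorization_le_one p
  omega

lemma Nat.squarefree_sq_mul_iff_of_squarefree {a b : ℕ} (ha : Squarefree a) :
    Squarefree (b ^ 2 * a) ↔ b = 1 := by
  refine ⟨fun h ↦ Nat.isUnit_iff.mp (h b ⟨a, by ring⟩), ?_⟩
  rintro rfl
  simpa using ha

lemma ArithmeticFunction.sum_divisors_moebius (n : ℕ) :
    ∑ d ∈ n.divisors, μ d = if n = 1 then 1 else 0 := by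
  rw [← coe_mul_zeta_apply, moebius_mul_coe_zeta, one_apply]

lemma ArithmeticFunction.sum_divisors_sq_dvd_moebius {n : ℕ} (hn : n ≠ 0) :
    ∑ d ∈ n.divisors with d ^ 2 ∣ n, μ d = if Squarefree n then 1 else 0 := by
  obtain ⟨a, b, rfl, ha⟩ := Nat.sq_mul_squarefree n
  have hb : b ≠ 0 := by rintro rfl; simp at hn
  have hdivisors : {d ∈ (b ^ 2 * a).divisors | d ^ 2 ∣ b ^ 2 * a} = b.divisors := by
    ext d
    simp only [mem_filter, Nat.mem_divisors, Nat.sq_dvd_sq_mul_iff_of_squarefree ha]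
    exact ⟨fun h ↦ ⟨h.2, hb⟩, fun h ↦
      ⟨⟨h.1.trans ((dvd_pow_self b two_ne_zero).mul_right a), hn⟩, h.1⟩⟩
  simp only [hdivisors, sum_divisors_moebius, Nat.squarefree_sq_mul_iff_of_squarefree ha]

lemma card_filter_squarefree_Icc (N : ℕ) :
    (#{n ∈ Icc 1 N | Squarefree n} : ℤ) = ∑ d ∈ Icc 1 N, μ d * (N / d ^ 2 : ℕ) := by
  calc (#{n ∈ Icc 1 N | Squarefree n} : ℤ)
      = ∑ n ∈ Icc 1 N, if Squarefree n then 1 else 0 := natCast_card_filter _ _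
    _ = ∑ n ∈ Icc 1 N, ∑ d ∈ n.divisors with d ^ 2 ∣ n, μ d :=
        sum_congr rfl fun n hn ↦ (sum_divisors_sq_dvd_moebius (by grind)).symm
    _ = ∑ d ∈ Icc 1 N, ∑ n ∈ Icc 1 N with d ^ 2 ∣ n, μ d := by
        refine sum_comm' fun n d ↦ ?_
        simp only [mem_Icc, mem_filter, Nat.mem_divisors]
        constructor
        · rintro ⟨hn, ⟨hdn, -⟩, hdsq⟩
          have := Nat.le_of_dvd (by omega) hdn
          have := Nat.pos_of_dvd_of_pos hdn (by omega)
          exact ⟨⟨hn, hdsq⟩, by omega, by omega⟩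
        · rintro ⟨⟨hn, hdsq⟩, -⟩
          exact ⟨hn, ⟨(dvd_pow_self d two_ne_zero).trans hdsq, by omega⟩, hdsq⟩
    _ = ∑ d ∈ Icc 1 N, μ d * (N / d ^ 2 : ℕ) := by
        refine sum_congr rfl fun d _ ↦ ?_
        rw [sum_const, nsmul_eq_mul, mul_comm, ← Nat.Ioc_filter_dvd_card_eq_div]
        rfl

lemma card_filter_squarefree_Icc_div_eq_tsum (N : ℕ) :
    (#{n ∈ Icc 1 N | Squarefree n} : ℝ) / N =
      ∑' d : ℕ, (μ d : ℝ) * (((N / d ^ 2 : ℕ) : ℝ) / N) := by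
  have h : (#{n ∈ Icc 1 N | Squarefree n} : ℝ) =
      ∑ d ∈ Icc 1 N, (μ d : ℝ) * ((N / d ^ 2 : ℕ) : ℝ) := by
    simpa only [Int.cast_natCast, Int.cast_sum, Int.cast_mul] using
      congrArg (Int.cast : ℤ → ℝ) (card_filter_squarefree_Icc N)
  rw [h, sum_div, tsum_eq_sum (s := Icc 1 N)]
  · exact sum_congr rfl fun d _ ↦ by rw [mul_div_assoc]
  · intro d hd
    rw [mem_Icc, not_and_or, not_le, Nat.lt_one_iff] at hd
    rcases hd with rfl | hd
    · simp
    · rw [Nat.div_eq_of_lt (by nlinarith), Nat.cast_zero, zero_div, mul_zero]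

lemma tendsto_nat_div_div_atTop (k : ℕ) :
    Tendsto (fun N : ℕ ↦ ((N / k : ℕ) : ℝ) / N) atTop (𝓝 (1 / k)) := by
  refine ((tendsto_nat_floor_mul_div_atTop (a := (1 / k : ℝ)) (by positivity)).comp
    tendsto_natCast_atTop_atTop).congr fun N ↦ ?_
  simp only [Function.comp_apply, one_div_mul_eq_div, Nat.floor_div_eq_div]

lemma Nat.cast_div_div_le_one_div (N k : ℕ) : ((N / k : ℕ) : ℝ) / N ≤ 1 / k := by
  rcases eq_or_ne N 0 with rfl | hN
  · simp
  · calc ((N / k : ℕ) : ℝ) / N ≤ (N / k : ℝ) / N := by gcongr; exact Nat.cast_div_le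
      _ = 1 / k := by field_simp

/-- The density of square-free numbers exists and equals `6/π²`. -/
theorem density_of_squarefree :
    Tendsto (fun N : ℕ =>
      (((Finset.Icc 1 N).filter (fun n : ℕ => Squarefree n)).card : ℝ) / (N : ℝ))
      atTop (nhds (6 / Real.pi ^ 2)) := by
  simp_rw [card_filter_squarefree_Icc_div_eq_tsum, ← hasSum_moebius_div_sq.tsum_eq]
  refine tendsto_tsum_of_dominated_convergence (bound := fun d : ℕ ↦ 1 / (d : ℝ) ^ 2)
    (Real.summable_one_div_nat_pow.mpr one_lt_two) (fun d ↦ ?_) (.of_forall fun N d ↦ ?_)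
  · convert (tendsto_nat_div_div_atTop (d ^ 2)).const_mul (μ d : ℝ) using 2
    push_cast
    ring
  · rw [norm_mul, Real.norm_eq_abs, Real.norm_of_nonneg (by positivity)]
    calc |(μ d : ℝ)| * (((N / d ^ 2 : ℕ) : ℝ) / N) ≤ 1 * (1 / ((d ^ 2 : ℕ) : ℝ)) := by
          gcongr ?_ * ?_
          · exact_mod_cast abs_moebius_le_one
          · exact Nat.cast_div_div_le_one_div N (d ^ 2)
      _ = 1 / (d : ℝ) ^ 2 := by push_cast; ring
end

section
/- Let d be a square-free positive integer. The series over all ordered pairs (P₀, P₁) of finite sets of primes satisfying ∏_{p ∈ P₀ ∩ P₁} p = d, with general term (−1)^{|P₀|+|P₁|} / (∏_{p ∈ P₀ ∪ P₁} p)², converges absolutely, and its sum equals σ_d = (1/d²)·∏_{p prime, p ∤ d} (1 − 2/p²). -/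
open Finset Filter

private lemma sum_powerset_prod {ι : Type*} [DecidableEq ι] (f : ι → ℝ) (s : Finset ι) :
    ∑ C ∈ s.powerset, ∏ i ∈ C, f i = ∏ i ∈ s, (1 + f i) := by
  have h : ∀ i ∈ s, (1 : ℝ) + f i = f i + 1 := fun i _ => add_comm _ _
  rw [Finset.prod_congr rfl h, Finset.prod_add]
  simp

private lemma tendsto_powerset_atTop {ι : Type*} [DecidableEq ι] :
    Tendsto (fun s : Finset ι => s.powerset) atTop atTop :=
  tendsto_atTop_atTop.2 fun B => ⟨B.sup id, fun s hs =>
    Finset.le_iff_subset.2 fun C hC =>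
      Finset.mem_powerset.2 (le_trans (Finset.le_sup (f := id) hC) hs)⟩

private lemma key_lemma {ι : Type*} [DecidableEq ι] (f : ι → ℝ) (hf : Summable fun i => |f i|) :
    Summable (fun C : Finset ι => ∏ i ∈ C, |f i|) ∧
    Summable (fun C : Finset ι => ∏ i ∈ C, f i) ∧
    HasProd (fun i => 1 + f i) (∑' C : Finset ι, ∏ i ∈ C, f i) := by
  have habs : Summable (fun C : Finset ι => ∏ i ∈ C, |f i|) := by
    apply summable_of_sum_le (c := Real.exp (∑' i, |f i|))
    · intro C; positivity
    · intro u
      calc ∑ C ∈ u, ∏ i ∈ C, |f i|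
          ≤ ∑ C ∈ (u.sup id).powerset, ∏ i ∈ C, |f i| := by
            apply Finset.sum_le_sum_of_subset_of_nonneg
            · intro C hC; exact Finset.mem_powerset.2 (Finset.le_sup (f := id) hC)
            · intros; positivity
        _ = ∏ i ∈ u.sup id, (1 + |f i|) := sum_powerset_prod _ _
        _ ≤ ∏ i ∈ u.sup id, Real.exp |f i| := by
            apply Finset.prod_le_prod
            · intros; positivity
            · intro i _; rw [add_comm]; exact Real.add_one_le_exp _
        _ = Real.exp (∑ i ∈ u.sup id, |f i|) := (Real.exp_sum _ _).symm
        _ ≤ Real.exp (∑' i, |f i|) :=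
            Real.exp_le_exp.2 (Summable.sum_le_tsum _ (fun _ _ => abs_nonneg _) hf)
  have hsum : Summable (fun C : Finset ι => ∏ i ∈ C, f i) :=
    Summable.of_abs (by simpa [Finset.abs_prod] using habs)
  refine ⟨habs, hsum, ?_⟩
  have h1 : Tendsto (fun s : Finset ι => ∑ C ∈ s.powerset, ∏ i ∈ C, f i) atTop
      (nhds (∑' C : Finset ι, ∏ i ∈ C, f i)) := hsum.hasSum.comp tendsto_powerset_atTop
  have h2 : (fun s : Finset ι => ∑ C ∈ s.powerset, ∏ i ∈ C, f i)
      = fun s => ∏ i ∈ s, (1 + f i) := funext fun s => sum_powerset_prod f s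
  rw [HasProd]
  rwa [h2] at h1

section
variable (d : ℕ)

private abbrev PIdx := {p : ℕ // p.Prime ∧ ¬ p ∣ d}

private abbrev PT := {PP : Finset ℕ × Finset ℕ //
    (∀ p ∈ PP.1, p.Prime) ∧ (∀ p ∈ PP.2, p.Prime) ∧ ∏ p ∈ PP.1 ∩ PP.2, p = d}

private abbrev pemb : PIdx d ↪ ℕ := Function.Embedding.subtype _

private lemma disjD (A : Finset (PIdx d)) : Disjoint d.primeFactors (A.map (pemb d)) := by
  rw [Finset.disjoint_right]
  intro q hq hq'
  rcases Finset.mem_map.1 hq with ⟨a, _, rfl⟩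
  exact a.2.2 (Nat.dvd_of_mem_primeFactors hq')

private lemma pair_mem (hd : Squarefree d) (A B : Finset (PIdx d)) (hAB : Disjoint A B) :
    (∀ p ∈ d.primeFactors ∪ A.map (pemb d), p.Prime) ∧
    (∀ p ∈ d.primeFactors ∪ B.map (pemb d), p.Prime) ∧
    ∏ p ∈ (d.primeFactors ∪ A.map (pemb d)) ∩ (d.primeFactors ∪ B.map (pemb d)), p = d := by
  have hprime : ∀ (S : Finset (PIdx d)), ∀ p ∈ d.primeFactors ∪ S.map (pemb d), p.Prime := by
    intro S p hp
    rcases Finset.mem_union.1 hp with h | h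
    · exact Nat.prime_of_mem_primeFactors h
    · rcases Finset.mem_map.1 h with ⟨a, _, rfl⟩; exact a.2.1
  refine ⟨hprime A, hprime B, ?_⟩
  have hinter : (d.primeFactors ∪ A.map (pemb d)) ∩ (d.primeFactors ∪ B.map (pemb d))
      = d.primeFactors := by
    ext q
    simp only [Finset.mem_inter, Finset.mem_union]
    constructor
    · rintro ⟨hq1 | hq1, hq2 | hq2⟩
      · exact hq1
      · exact hq1
      · exact hq2
      · exfalso
        rcases Finset.mem_map.1 hq1 with ⟨a, ha, rfl⟩
        rcases Finset.mem_map.1 hq2 with ⟨b, hb, hba⟩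
        have hba' : b = a := Subtype.ext hba
        exact Finset.disjoint_left.1 hAB ha (hba' ▸ hb)
    · intro h; exact ⟨Or.inl h, Or.inl h⟩
  rw [hinter]
  exact Nat.prod_primeFactors_of_squarefree hd

private def gmap (hd : Squarefree d)
    (x : Σ C : Finset (PIdx d), {A : Finset (PIdx d) // A ∈ C.powerset}) : PT d :=
  ⟨(d.primeFactors ∪ x.2.val.map (pemb d),
    d.primeFactors ∪ (x.1 \ x.2.val).map (pemb d)),
    pair_mem d hd _ _ Finset.disjoint_sdiff⟩

end
section
variable (d : ℕ)

private lemma gmap_injective (hd : Squarefree d) : Function.Injective (gmap d hd) := by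
  rintro ⟨C₁, A₁, hA₁⟩ ⟨C₂, A₂, hA₂⟩ h
  have h' := Subtype.ext_iff.1 h
  have cancel : ∀ S T : Finset (PIdx d),
      d.primeFactors ∪ S.map (pemb d) = d.primeFactors ∪ T.map (pemb d) → S = T := by
    intro S T hST
    apply Finset.map_injective (pemb d)
    have h3 : (d.primeFactors ∪ S.map (pemb d)) \ d.primeFactors
        = (d.primeFactors ∪ T.map (pemb d)) \ d.primeFactors := by rw [hST]
    rwa [Finset.union_sdiff_cancel_left (disjD d S),
      Finset.union_sdiff_cancel_left (disjD d T)] at h3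
  have hA : A₁ = A₂ := cancel _ _ (congrArg Prod.fst h')
  have hC' : C₁ \ A₁ = C₂ \ A₂ := cancel _ _ (congrArg Prod.snd h')
  subst hA
  have hC : C₁ = C₂ := by
    rw [← Finset.union_sdiff_of_subset (Finset.mem_powerset.1 hA₁),
        ← Finset.union_sdiff_of_subset (Finset.mem_powerset.1 hA₂), hC']
  subst hC
  rfl

private lemma gmap_surjective (hd : Squarefree d) : Function.Surjective (gmap d hd) := by
  rintro ⟨⟨P₀, P₁⟩, h₀, h₁, hprod⟩
  have hI : P₀ ∩ P₁ = d.primeFactors := by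
    rw [← hprod, Nat.primeFactors_prod]
    intro p hp
    exact h₀ p (Finset.mem_inter.1 hp).1
  have hmem : ∀ (P : Finset ℕ), (∀ p ∈ P, p.Prime) →
      ∀ q ∈ P \ d.primeFactors, q.Prime ∧ ¬ q ∣ d := by
    intro P hP q hq
    rcases Finset.mem_sdiff.1 hq with ⟨hq1, hq2⟩
    refine ⟨hP q hq1, fun hdvd => hq2 ?_⟩
    exact Nat.mem_primeFactors.2 ⟨hP q hq1, hdvd, hd.ne_zero⟩
  set A := (P₀ \ d.primeFactors).subtype (fun p => p.Prime ∧ ¬ p ∣ d) with hA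
  set B := (P₁ \ d.primeFactors).subtype (fun p => p.Prime ∧ ¬ p ∣ d) with hB
  have hAmap : A.map (pemb d) = P₀ \ d.primeFactors := by
    rw [hA, Finset.subtype_map_of_mem (hmem P₀ h₀)]
  have hBmap : B.map (pemb d) = P₁ \ d.primeFactors := by
    rw [hB, Finset.subtype_map_of_mem (hmem P₁ h₁)]
  have hdisj : Disjoint A B := by
    rw [Finset.disjoint_left]
    intro a ha hb
    rw [hA, Finset.mem_subtype] at ha
    rw [hB, Finset.mem_subtype] at hb
    have : (a : ℕ) ∈ P₀ ∩ P₁ :=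
      Finset.mem_inter.2 ⟨(Finset.mem_sdiff.1 ha).1, (Finset.mem_sdiff.1 hb).1⟩
    exact (Finset.mem_sdiff.1 ha).2 (hI ▸ this)
  refine ⟨⟨A ∪ B, A, Finset.mem_powerset.2 Finset.subset_union_left⟩, ?_⟩
  have hCB : (A ∪ B) \ A = B := Finset.union_sdiff_cancel_left hdisj
  have hDP₀ : d.primeFactors ⊆ P₀ := hI ▸ Finset.inter_subset_left
  have hDP₁ : d.primeFactors ⊆ P₁ := hI ▸ Finset.inter_subset_right
  apply Subtype.ext
  show (d.primeFactors ∪ A.map (pemb d), d.primeFactors ∪ ((A ∪ B) \ A).map (pemb d)) = (P₀, P₁)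
  rw [hCB, hAmap, hBmap, Finset.union_sdiff_of_subset hDP₀, Finset.union_sdiff_of_subset hDP₁]

end
section
variable (d : ℕ)

private lemma gmap_term (hd : Squarefree d)
    (x : Σ C : Finset (PIdx d), {A : Finset (PIdx d) // A ∈ C.powerset}) :
    (-1 : ℝ) ^ ((gmap d hd x).val.1.card + (gmap d hd x).val.2.card) /
      ((∏ p ∈ (gmap d hd x).val.1 ∪ (gmap d hd x).val.2, p : ℕ) : ℝ) ^ 2
    = (1 / (d : ℝ) ^ 2) * ∏ p ∈ x.1, (-1 / ((p : ℕ) : ℝ) ^ 2) := by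
  rcases x with ⟨C, A, hA⟩
  have hA' : A ⊆ C := Finset.mem_powerset.1 hA
  set D := d.primeFactors with hDdef
  have hcard1 : (D ∪ A.map (pemb d)).card = D.card + A.card := by
    rw [Finset.card_union_of_disjoint (disjD d A), Finset.card_map]
  have hcard2 : (D ∪ (C \ A).map (pemb d)).card = D.card + (C \ A).card := by
    rw [Finset.card_union_of_disjoint (disjD d _), Finset.card_map]
  have hunion : (D ∪ A.map (pemb d)) ∪ (D ∪ (C \ A).map (pemb d)) = D ∪ C.map (pemb d) := by
    rw [Finset.union_union_union_comm, Finset.union_self, ← Finset.map_union,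
      Finset.union_sdiff_of_subset hA']
  have hexp : (D ∪ A.map (pemb d)).card + (D ∪ (C \ A).map (pemb d)).card
      = 2 * D.card + C.card := by
    have := Finset.card_sdiff_add_card_eq_card hA'
    omega
  have hprod : ∏ p ∈ (D ∪ A.map (pemb d)) ∪ (D ∪ (C \ A).map (pemb d)), p
      = d * ∏ q ∈ C, (q : ℕ) := by
    rw [hunion, Finset.prod_union (disjD d C), Nat.prod_primeFactors_of_squarefree hd,
      Finset.prod_map]
    rfl
  show (-1 : ℝ) ^ ((D ∪ A.map (pemb d)).card + (D ∪ (C \ A).map (pemb d)).card) /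
      ((∏ p ∈ (D ∪ A.map (pemb d)) ∪ (D ∪ (C \ A).map (pemb d)), p : ℕ) : ℝ) ^ 2 = _
  rw [hexp, hprod]
  have hN : ((∏ q ∈ C, (q : ℕ) : ℕ) : ℝ) = ∏ q ∈ C, ((q : ℕ) : ℝ) := by push_cast; rfl
  rw [Nat.cast_mul, hN, Finset.prod_div_distrib, Finset.prod_const, Finset.prod_pow,
    pow_add, pow_mul, neg_one_sq, one_pow, one_mul, mul_pow]
  ring

end
/-- `σ_d = (1/d²)·∏_{p prime, p ∤ d} (1 − 2/p²)`. -/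
noncomputable def sigmaSF (d : ℕ) : ℝ :=
  (1 / (d : ℝ) ^ 2) * ∏' p : {p : ℕ // p.Prime ∧ ¬ p ∣ d}, (1 - 2 / ((p : ℕ) : ℝ) ^ 2)

/-- For square-free `d`, the series over ordered pairs `(P₀, P₁)` of finite sets of
primes with `∏_{p ∈ P₀ ∩ P₁} p = d`, with term `(−1)^{|P₀|+|P₁|}/(∏_{p∈P₀∪P₁} p)²`,
converges absolutely and sums to `σ_d`. -/
theorem hasSum_sigmaSF (d : ℕ) (hd : Squarefree d) :
    Summable (fun P : {PP : Finset ℕ × Finset ℕ //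
        (∀ p ∈ PP.1, p.Prime) ∧ (∀ p ∈ PP.2, p.Prime) ∧ ∏ p ∈ PP.1 ∩ PP.2, p = d} =>
      |(-1 : ℝ) ^ (P.1.1.card + P.1.2.card) / ((∏ p ∈ P.1.1 ∪ P.1.2, p : ℕ) : ℝ) ^ 2|)
    ∧ HasSum (fun P : {PP : Finset ℕ × Finset ℕ //
        (∀ p ∈ PP.1, p.Prime) ∧ (∀ p ∈ PP.2, p.Prime) ∧ ∏ p ∈ PP.1 ∩ PP.2, p = d} =>
      (-1 : ℝ) ^ (P.1.1.card + P.1.2.card) / ((∏ p ∈ P.1.1 ∪ P.1.2, p : ℕ) : ℝ) ^ 2)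
      (sigmaSF d) := by
  classical
  set c : PIdx d → ℝ := fun p => 2 * (-1 / ((p : ℕ) : ℝ) ^ 2) with hc
  have hcabs : Summable fun p : PIdx d => |c p| := by
    have h0 : Summable (fun n : ℕ => 2 * (1 / (n : ℝ) ^ 2)) :=
      (Real.summable_one_div_nat_pow.2 one_lt_two).mul_left 2
    have h1 : Summable ((fun n : ℕ => 2 * (1 / (n : ℝ) ^ 2)) ∘ (Subtype.val : PIdx d → ℕ)) :=
      h0.comp_injective Subtype.val_injective
    apply h1.congr
    intro p
    show 2 * (1 / ((p : ℕ) : ℝ) ^ 2) = |c p|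
    simp only [hc, abs_mul, abs_div, abs_neg, abs_one, abs_pow, Nat.abs_cast]
    norm_num
  obtain ⟨habsF, hsumF, hprodF⟩ := key_lemma c hcabs
  set L := ∑' C : Finset (PIdx d), ∏ p ∈ C, c p with hL
  have hLP : ∏' p : PIdx d, (1 - 2 / ((p : ℕ) : ℝ) ^ 2) = L := by
    rw [← hprodF.tprod_eq]
    apply tprod_congr
    intro p
    simp only [hc]
    ring
  have hgfun : HasSum (fun C : Finset (PIdx d) => (1 / (d : ℝ) ^ 2) * ∏ p ∈ C, c p)
      ((1 / (d : ℝ) ^ 2) * L) := hsumF.hasSum.mul_left _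
  have hfiber : ∀ C : Finset (PIdx d),
      HasSum (fun _ : {A : Finset (PIdx d) // A ∈ C.powerset} =>
        (1 / (d : ℝ) ^ 2) * ∏ p ∈ C, (-1 / ((p : ℕ) : ℝ) ^ 2))
        ((1 / (d : ℝ) ^ 2) * ∏ p ∈ C, c p) := by
    intro C
    have heq : (1 / (d : ℝ) ^ 2) * ∏ p ∈ C, c p
        = ∑ _A : {A : Finset (PIdx d) // A ∈ C.powerset},
            (1 / (d : ℝ) ^ 2) * ∏ p ∈ C, (-1 / ((p : ℕ) : ℝ) ^ 2) := by
      rw [Finset.sum_const, Finset.card_univ, Fintype.card_coe, Finset.card_powerset,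
        nsmul_eq_mul]
      push_cast
      simp only [hc]
      rw [Finset.prod_mul_distrib, Finset.prod_const]
      ring
    rw [heq]
    exact hasSum_fintype _
  have habsf : Summable (fun x : Σ C : Finset (PIdx d), {A : Finset (PIdx d) // A ∈ C.powerset} =>
      |(1 / (d : ℝ) ^ 2) * ∏ p ∈ x.1, (-1 / ((p : ℕ) : ℝ) ^ 2)|) := by
    apply (summable_sigma_of_nonneg (fun x => abs_nonneg _)).2
    refine ⟨fun C => (hasSum_fintype _).summable, ?_⟩
    apply (habsF.mul_left ((1 : ℝ) / (d : ℝ) ^ 2)).congr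
    intro C
    rw [tsum_fintype]
    have key : (1 : ℝ) / (d : ℝ) ^ 2 * ∏ i ∈ C, |c i|
        = ∑ _b : {A : Finset (PIdx d) // A ∈ C.powerset},
            |1 / (d : ℝ) ^ 2 * ∏ p ∈ C, (-1 / ((p : ℕ) : ℝ) ^ 2)| := by
      rw [Finset.sum_const, Finset.card_univ, Fintype.card_coe,
        Finset.card_powerset, nsmul_eq_mul]
      have h2 : ∏ p ∈ C, |c p| = (2 : ℝ) ^ C.card * ∏ p ∈ C, |(-1 : ℝ) / ((p : ℕ) : ℝ) ^ 2| := by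
        have : ∀ p ∈ C, |c p| = 2 * |(-1 : ℝ) / ((p : ℕ) : ℝ) ^ 2| := by
          intro p _
          simp only [hc]
          rw [abs_mul]
          norm_num
        rw [Finset.prod_congr rfl this, Finset.prod_mul_distrib, Finset.prod_const]
      rw [h2, abs_mul, Finset.abs_prod, abs_of_nonneg (by positivity : (0:ℝ) ≤ 1 / (d : ℝ) ^ 2)]
      push_cast
      ring
    exact key
  have hsumf : Summable (fun x : Σ C : Finset (PIdx d),
      {A : Finset (PIdx d) // A ∈ C.powerset} =>
      (1 / (d : ℝ) ^ 2) * ∏ p ∈ x.1, (-1 / ((p : ℕ) : ℝ) ^ 2)) := habsf.of_abs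
  have hsig : HasSum (fun x : Σ C : Finset (PIdx d),
      {A : Finset (PIdx d) // A ∈ C.powerset} =>
      (1 / (d : ℝ) ^ 2) * ∏ p ∈ x.1, (-1 / ((p : ℕ) : ℝ) ^ 2))
      ((1 / (d : ℝ) ^ 2) * L) :=
    HasSum.sigma_of_hasSum hgfun (fun C => hfiber C) hsumf
  set term : PT d → ℝ := fun P =>
    (-1 : ℝ) ^ (P.1.1.card + P.1.2.card) / ((∏ p ∈ P.1.1 ∪ P.1.2, p : ℕ) : ℝ) ^ 2 with hterm
  have hbij : Function.Bijective (gmap d hd) :=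
    ⟨gmap_injective d hd, gmap_surjective d hd⟩
  set e := Equiv.ofBijective (gmap d hd) hbij with he
  have hcomp : (term ∘ e) = fun x : Σ C : Finset (PIdx d),
      {A : Finset (PIdx d) // A ∈ C.powerset} =>
      (1 / (d : ℝ) ^ 2) * ∏ p ∈ x.1, (-1 / ((p : ℕ) : ℝ) ^ 2) :=
    funext fun x => gmap_term d hd x
  have hsumterm : Summable term := e.summable_iff.1 (by rw [hcomp]; exact hsumf)
  have hhasterm : HasSum term (sigmaSF d) := by
    have : sigmaSF d = (1 / (d : ℝ) ^ 2) * L := by rw [sigmaSF, hLP]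
    rw [this]
    exact e.hasSum_iff.1 (by rw [hcomp]; exact hsig)
  exact ⟨hsumterm.abs, hhasterm⟩
end

section
/- For every integer k, c₂(k) = Σ_{d square-free, d² ∣ k} σ_d; here the sum ranges over all square-free positive integers d with d² dividing k (a finite set when k ≠ 0, and all square-free d when k = 0, in which case the series converges absolutely). -/
/-- Mirsky's second correlation function
`c₂(k) = ∏_{p², p²∣k} (1 − 1/p²) · ∏_{p, p²∤k} (1 − 2/p²)`. -/
noncomputable def corr2 (k : ℤ) : ℝ :=
  (∏' p : {p : ℕ // p.Prime ∧ ((p : ℤ)) ^ 2 ∣ k}, (1 - 1 / ((p : ℕ) : ℝ) ^ 2)) *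
  ∏' p : {p : ℕ // p.Prime ∧ ¬ ((p : ℤ)) ^ 2 ∣ k}, (1 - 2 / ((p : ℕ) : ℝ) ^ 2)

/-!
For square-free `d` one has `σ_d = F · f_k(d)`, where `F = ∏_p (1 - 2/p²)` and
`f_k(d) = 1_{d² ∣ k} · d⁻² · ∏_{p ∣ d} (1 - 2/p²)⁻¹`; unlike `σ`, the function `f_k` is visibly
multiplicative, and `|σ_d| ≤ 1/d²` makes it absolutely summable. The Euler product turns
`∑_d f_k(d)` into `∏_p (1 + f_k(p))`, and multiplying by `F` factor by factor gives
`(1 - 2/p²)(1 + f_k(p)) = 1 - 1/p²` if `p² ∣ k` and `1 - 2/p²` otherwise, i.e. `c₂(k)`.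
-/

open Real Function

lemma Real.tprod_mem_Ioc_of_summable_log {ι : Type*} {g : ι → ℝ} (hpos : ∀ i, 0 < g i)
    (hle : ∀ i, g i ≤ 1) (hlog : Summable fun i => log (g i)) :
    ∏' i, g i ∈ Set.Ioc 0 1 := by
  rw [← Real.rexp_tsum_eq_tprod hpos hlog]
  exact ⟨exp_pos _, exp_le_one_iff.mpr (tsum_nonpos fun i => log_nonpos (hpos i).le (hle i))⟩

lemma summable_div_natCast_sq (c : ℝ) : Summable fun n : ℕ => c / (n : ℝ) ^ 2 := by
  simpa [div_eq_mul_one_div c] using (summable_one_div_nat_pow.mpr one_lt_two).mul_left c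

lemma multipliable_one_sub_div_sq (c : ℝ) {ι : Type*} {v : ι → ℕ} (hv : Injective v) :
    Multipliable fun i => 1 - c / (v i : ℝ) ^ 2 := by
  simpa [sub_eq_add_neg] using
    Real.multipliable_one_add_of_summable ((summable_div_natCast_sq c).comp_injective hv).neg

lemma Nat.Prime.one_sub_div_sq_pos {p : ℕ} (hp : p.Prime) {c : ℝ} (hc : c < 4) :
    0 < 1 - c / (p : ℝ) ^ 2 := by
  have h4 : (4 : ℝ) ≤ (p : ℝ) ^ 2 := by
    have : (2 : ℝ) ≤ p := by exact_mod_cast hp.two_le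
    nlinarith
  rw [sub_pos, div_lt_one (by positivity)]
  linarith

lemma tprod_one_sub_two_div_sq_mem_Ioc {ι : Type*} {v : ι → ℕ} (hv : Injective v)
    (hp : ∀ i, (v i).Prime) : ∏' i, (1 - 2 / (v i : ℝ) ^ 2) ∈ Set.Ioc 0 1 := by
  refine tprod_mem_Ioc_of_summable_log (fun i => (hp i).one_sub_div_sq_pos (by norm_num))
    (fun i => sub_le_self _ (by positivity)) ?_
  simpa [sub_eq_add_neg, comp_def] using
    (summable_log_one_add_of_summable (summable_div_natCast_sq 2).neg).comp_injective hv

lemma tprod_primes_ite (P : ℕ → Prop) [DecidablePred P] (g h : ℕ → ℝ)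
    (hg : Multipliable fun p : {p : ℕ // p.Prime ∧ P p} => g p)
    (hh : Multipliable fun p : {p : ℕ // p.Prime ∧ ¬ P p} => h p) :
    ∏' p : Nat.Primes, (if P p then g p else h p) =
      (∏' p : {p : ℕ // p.Prime ∧ P p}, g p) * ∏' p : {p : ℕ // p.Prime ∧ ¬ P p}, h p := by
  let W : Nat.Primes → ℝ := fun p => if P p then g p else h p
  let s : Set Nat.Primes := {p | P p}
  let e := Equiv.subtypeSubtypeEquivSubtypeInter (fun p : ℕ => p.Prime) P
  let ec := Equiv.subtypeSubtypeEquivSubtypeInter (fun p : ℕ => p.Prime) (¬ P ·)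
  have hWs : ∀ p : s, W p = g (e p) := fun p => if_pos p.2
  have hWsc : ∀ p : ↥sᶜ, W p = h (ec p) := fun p => if_neg p.2
  have hms : Multipliable fun p : s => W p :=
    (e.multipliable_iff.mpr hg).congr fun p => (hWs p).symm
  have hmsc : Multipliable fun p : ↥sᶜ => W p :=
    (ec.multipliable_iff.mpr hh).congr fun p => (hWsc p).symm
  have h1 : ∏' p, W p = (∏' p : s, W p) * ∏' p : ↥sᶜ, W p :=
    (Multipliable.tprod_mul_tprod_compl (f := W) (s := s) hms hmsc).symm
  have h2 : (∏' p : s, W p) = ∏' p : {p : ℕ // p.Prime ∧ P p}, g p := by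
    rw [tprod_congr hWs]; exact e.tprod_eq fun p => g p
  have h3 : (∏' p : ↥sᶜ, W p) = ∏' p : {p : ℕ // p.Prime ∧ ¬ P p}, h p := by
    rw [tprod_congr hWsc]; exact ec.tprod_eq fun p => h p
  exact h1.trans (by rw [h2, h3])

noncomputable def mirskyConst : ℝ := ∏' p : Nat.Primes, (1 - 2 / ((p : ℕ) : ℝ) ^ 2)

lemma mirskyConst_pos : 0 < mirskyConst :=
  (tprod_one_sub_two_div_sq_mem_Ioc Subtype.val_injective fun p : Nat.Primes => p.2).1

lemma abs_sigmaSF_le (d : ℕ) : |sigmaSF d| ≤ 1 / (d : ℝ) ^ 2 := by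
  obtain ⟨h0, h1⟩ := tprod_one_sub_two_div_sq_mem_Ioc Subtype.val_injective
    fun p : {p : ℕ // p.Prime ∧ ¬ p ∣ d} => p.2.1
  rw [sigmaSF, abs_mul, abs_of_nonneg h0.le, abs_of_nonneg (by positivity)]
  exact mul_le_of_le_one_right (by positivity) h1

lemma sigmaSF_eq_mirskyConst_mul {d : ℕ} (hd : d ≠ 0) :
    sigmaSF d = mirskyConst *
      (((d : ℝ) ^ 2)⁻¹ * ∏ p ∈ d.primeFactors, (1 - 2 / (p : ℝ) ^ 2)⁻¹) := by
  have hsplit := tprod_primes_ite (· ∣ d) (fun p => 1 - 2 / (p : ℝ) ^ 2)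
    (fun p => 1 - 2 / (p : ℝ) ^ 2) (multipliable_one_sub_div_sq 2 Subtype.val_injective)
    (multipliable_one_sub_div_sq 2 Subtype.val_injective)
  simp only [ite_self] at hsplit
  have hfin : ∏' p : {p : ℕ // p.Prime ∧ p ∣ d}, (1 - 2 / (p : ℝ) ^ 2) =
      ∏ p ∈ d.primeFactors, (1 - 2 / (p : ℝ) ^ 2) := by
    rw [← Finset.tprod_subtype]
    exact (Equiv.subtypeEquivRight (p := fun p : ℕ => p.Prime ∧ p ∣ d)
      (q := (· ∈ d.primeFactors)) fun p => by simp [hd]).tprod_eq fun p => 1 - 2 / (p : ℝ) ^ 2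
  have hne : ∏ p ∈ d.primeFactors, (1 - 2 / (p : ℝ) ^ 2) ≠ 0 :=
    Finset.prod_ne_zero_iff.mpr fun p hp =>
      ((Nat.prime_of_mem_primeFactors hp).one_sub_div_sq_pos (by norm_num)).ne'
  rw [mirskyConst, hsplit, hfin, sigmaSF, Finset.prod_inv_distrib]
  field_simp

lemma Nat.Coprime.cast_mul_sq_dvd_iff {m n : ℕ} (h : m.Coprime n) (k : ℤ) :
    ((m * n : ℕ) : ℤ) ^ 2 ∣ k ↔ (m : ℤ) ^ 2 ∣ k ∧ (n : ℤ) ^ 2 ∣ k := by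
  push_cast [mul_pow]
  exact ⟨fun hk => ⟨dvd_of_mul_right_dvd hk, dvd_of_mul_left_dvd hk⟩,
    fun hk => (Nat.Coprime.isCoprime h).pow.mul_dvd hk.1 hk.2⟩

noncomputable def sigmaRatio (k : ℤ) (d : ℕ) : ℝ :=
  if Squarefree d ∧ (d : ℤ) ^ 2 ∣ k then
    ((d : ℝ) ^ 2)⁻¹ * ∏ p ∈ d.primeFactors, (1 - 2 / (p : ℝ) ^ 2)⁻¹
  else 0

lemma mirskyConst_mul_sigmaRatio (k : ℤ) (d : ℕ) :
    mirskyConst * sigmaRatio k d = if Squarefree d ∧ (d : ℤ) ^ 2 ∣ k then sigmaSF d else 0 := by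
  unfold sigmaRatio
  split_ifs with hd
  · exact (sigmaSF_eq_mirskyConst_mul hd.1.ne_zero).symm
  · exact mul_zero _

lemma summable_norm_sigmaRatio (k : ℤ) : Summable fun d => ‖sigmaRatio k d‖ := by
  refine ((summable_div_natCast_sq 1).mul_left mirskyConst⁻¹).of_nonneg_of_le
    (fun _ => norm_nonneg _) fun d => ?_
  have hbound : |mirskyConst * sigmaRatio k d| ≤ 1 / (d : ℝ) ^ 2 := by
    rw [mirskyConst_mul_sigmaRatio]
    split_ifs
    · exact abs_sigmaSF_le d
    · simp
  rw [abs_mul, abs_of_pos mirskyConst_pos] at hbound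
  rw [Real.norm_eq_abs, le_inv_mul_iff₀ mirskyConst_pos]
  exact hbound

lemma sigmaRatio_zero (k : ℤ) : sigmaRatio k 0 = 0 := by
  simp [sigmaRatio]

lemma sigmaRatio_one (k : ℤ) : sigmaRatio k 1 = 1 := by
  simp [sigmaRatio]

lemma sigmaRatio_mul (k : ℤ) {m n : ℕ} (h : m.Coprime n) :
    sigmaRatio k (m * n) = sigmaRatio k m * sigmaRatio k n := by
  have hcond : (Squarefree (m * n) ∧ ((m * n : ℕ) : ℤ) ^ 2 ∣ k) ↔
      (Squarefree m ∧ (m : ℤ) ^ 2 ∣ k) ∧ (Squarefree n ∧ (n : ℤ) ^ 2 ∣ k) := by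
    rw [Nat.squarefree_mul h, h.cast_mul_sq_dvd_iff]
    tauto
  unfold sigmaRatio
  by_cases hmn : (Squarefree m ∧ (m : ℤ) ^ 2 ∣ k) ∧ (Squarefree n ∧ (n : ℤ) ^ 2 ∣ k)
  · rw [if_pos (hcond.2 hmn), if_pos hmn.1, if_pos hmn.2,
      Nat.primeFactors_mul hmn.1.1.ne_zero hmn.2.1.ne_zero,
      Finset.prod_union h.disjoint_primeFactors]
    push_cast
    ring
  · rw [if_neg (hcond.not.2 hmn)]
    rcases not_and_or.mp hmn with hm | hn
    · rw [if_neg hm, zero_mul]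
    · rw [if_neg hn, mul_zero]

lemma tsum_sigmaRatio_prime_pow (k : ℤ) {p : ℕ} (hp : p.Prime) :
    ∑' e, sigmaRatio k (p ^ e) = 1 + sigmaRatio k p := by
  have hvanish : ∀ e ∉ ({0, 1} : Finset ℕ), sigmaRatio k (p ^ e) = 0 := fun e he => by
    have he0 : e ≠ 0 := by rintro rfl; simp at he
    have he1 : e ≠ 1 := by rintro rfl; simp at he
    rw [sigmaRatio, if_neg]
    rw [Nat.squarefree_pow_iff hp.ne_one he0]
    exact fun h => he1 h.1.2
  rw [tsum_eq_sum hvanish, Finset.sum_pair zero_ne_one, pow_zero, pow_one, sigmaRatio_one]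

lemma one_sub_two_div_sq_mul_tsum_sigmaRatio_prime_pow (k : ℤ) {p : ℕ} (hp : p.Prime) :
    (1 - 2 / (p : ℝ) ^ 2) * ∑' e, sigmaRatio k (p ^ e) =
      if (p : ℤ) ^ 2 ∣ k then 1 - 1 / (p : ℝ) ^ 2 else 1 - 2 / (p : ℝ) ^ 2 := by
  have hne := (hp.one_sub_div_sq_pos (c := 2) (by norm_num)).ne'
  rw [tsum_sigmaRatio_prime_pow k hp, sigmaRatio, hp.primeFactors, Finset.prod_singleton]
  simp only [hp.squarefree, true_and]
  split_ifs
  · field_simp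
    ring
  · ring

lemma corr2_eq_mirskyConst_mul_tsum_sigmaRatio (k : ℤ) :
    corr2 k = mirskyConst * ∑' d, sigmaRatio k d := by
  have heuler := EulerProduct.eulerProduct_hasProd (sigmaRatio_one k)
    (fun h => sigmaRatio_mul k h) (summable_norm_sigmaRatio k) (sigmaRatio_zero k)
  have hlocal := ((multipliable_one_sub_div_sq 2 Subtype.val_injective).hasProd.mul
    heuler).congr_fun fun p : Nat.Primes =>
      (one_sub_two_div_sq_mul_tsum_sigmaRatio_prime_pow k p.2).symm
  exact (tprod_primes_ite (fun p : ℕ => (p : ℤ) ^ 2 ∣ k) (fun p => 1 - 1 / (p : ℝ) ^ 2)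
    (fun p => 1 - 2 / (p : ℝ) ^ 2) (multipliable_one_sub_div_sq 1 Subtype.val_injective)
    (multipliable_one_sub_div_sq 2 Subtype.val_injective)).symm.trans hlocal.tprod_eq

/-- For every integer `k`, `c₂(k) = Σ_{d square-free, d² ∣ k} σ_d`, the series being
absolutely convergent. -/
theorem corr2_eq_sum_sigmaSF (k : ℤ) :
    Summable (fun d : {d : ℕ // Squarefree d ∧ ((d : ℤ)) ^ 2 ∣ k} => |sigmaSF d|)
    ∧ HasSum (fun d : {d : ℕ // Squarefree d ∧ ((d : ℤ)) ^ 2 ∣ k} => sigmaSF d)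
      (corr2 k) := by
  have hsupp : support (sigmaRatio k) ⊆ {d | Squarefree d ∧ (d : ℤ) ^ 2 ∣ k} :=
    fun d hd => by_contra fun h => hd (if_neg h)
  have hsum : HasSum (fun d : {d : ℕ // Squarefree d ∧ ((d : ℤ)) ^ 2 ∣ k} => sigmaSF d)
      (corr2 k) := by
    rw [corr2_eq_mirskyConst_mul_tsum_sigmaRatio]
    refine (((hasSum_subtype_iff_of_support_subset hsupp).2
      (summable_norm_sigmaRatio k).of_norm.hasSum).mul_left mirskyConst).congr_fun fun d => ?_
    rw [comp_apply, mirskyConst_mul_sigmaRatio]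
    exact (if_pos d.2).symm
  exact ⟨hsum.summable.abs, hsum⟩
end

section
/- The series Σ_{d square-free} σ_d, taken over all square-free positive integers d, converges absolutely and equals 6/π². -/
open Real

theorem prod_primeFactors_mul_tprod_prime_not_dvd {α : Type*} [CommMonoid α] [TopologicalSpace α]
    [ContinuousMul α] [T2Space α] {u : ℕ → α} {n : ℕ} (hn : n ≠ 0)
    (hu : Multipliable fun p : {p : ℕ // p.Prime ∧ ¬ p ∣ n} => u p) :
    (∏ p ∈ n.primeFactors, u p) * ∏' p : {p : ℕ // p.Prime ∧ ¬ p ∣ n}, u p =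
      ∏' p : Nat.Primes, u p := by
  let s : Set Nat.Primes := {p | (p : ℕ) ∣ n}
  let eDvd : s ≃ n.primeFactors :=
    (Equiv.subtypeSubtypeEquivSubtypeInter Nat.Prime (· ∣ n)).trans
      (Equiv.subtypeEquivRight fun p => by simp [Nat.mem_primeFactors, hn])
  let eNotDvd : ↥sᶜ ≃ {p : ℕ // p.Prime ∧ ¬ p ∣ n} :=
    Equiv.subtypeSubtypeEquivSubtypeInter Nat.Prime (¬ · ∣ n)
  have hs : Multipliable fun p : s => u p :=
    (eDvd.multipliable_iff (f := fun p : n.primeFactors => u p)).mpr .of_finite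
  have hsc : Multipliable fun p : ↥sᶜ => u p :=
    (eNotDvd.multipliable_iff (f := fun p : {p : ℕ // p.Prime ∧ ¬ p ∣ n} => u p)).mpr hu
  have hDvd : ∏' p : s, u p = ∏ p ∈ n.primeFactors, u p := by
    rw [← Finset.tprod_subtype]; exact eDvd.tprod_eq (fun p : n.primeFactors => u p)
  have hNotDvd : ∏' p : ↥sᶜ, u p = ∏' p : {p : ℕ // p.Prime ∧ ¬ p ∣ n}, u p :=
    eNotDvd.tprod_eq (fun p : {p : ℕ // p.Prime ∧ ¬ p ∣ n} => u p)
  rw [← hDvd, ← hNotDvd]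
  exact Multipliable.tprod_mul_tprod_compl (f := fun p : Nat.Primes => u p) hs hsc

section SquarefreeProd

variable {R : Type*}

def squarefreeProd [CommMonoidWithZero R] (h : ℕ → R) (n : ℕ) : R :=
  if Squarefree n then ∏ p ∈ n.primeFactors, h p else 0

section CommMonoidWithZero

variable [CommMonoidWithZero R] {h : ℕ → R}

theorem squarefreeProd_zero : squarefreeProd h 0 = 0 :=
  if_neg not_squarefree_zero

theorem squarefreeProd_one : squarefreeProd h 1 = 1 := by
  simp [squarefreeProd]

theorem squarefreeProd_of_not_squarefree {n : ℕ} (hn : ¬ Squarefree n) :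
    squarefreeProd h n = 0 :=
  if_neg hn

theorem squarefreeProd_mul {m n : ℕ} (hmn : m.Coprime n) :
    squarefreeProd h (m * n) = squarefreeProd h m * squarefreeProd h n := by
  by_cases hm : Squarefree m
  · by_cases hn : Squarefree n
    · rw [squarefreeProd, if_pos ((Nat.squarefree_mul hmn).mpr ⟨hm, hn⟩),
        Nat.primeFactors_mul hm.ne_zero hn.ne_zero, Finset.prod_union hmn.disjoint_primeFactors,
        squarefreeProd, if_pos hm, squarefreeProd, if_pos hn]
    · rw [squarefreeProd_of_not_squarefree hn, mul_zero,
        squarefreeProd_of_not_squarefree fun hmn' => hn hmn'.of_mul_right]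
  · rw [squarefreeProd_of_not_squarefree hm, zero_mul,
      squarefreeProd_of_not_squarefree fun hmn' => hm hmn'.of_mul_left]

theorem squarefreeProd_nonneg [PartialOrder R] [ZeroLEOneClass R] [PosMulMono R]
    (hh : ∀ p, p.Prime → 0 ≤ h p) (n : ℕ) : 0 ≤ squarefreeProd h n := by
  unfold squarefreeProd
  split_ifs
  · exact Finset.prod_nonneg fun p hp => hh p (Nat.prime_of_mem_primeFactors hp)
  · exact le_rfl

end CommMonoidWithZero

theorem tsum_squarefreeProd_prime_pow [CommSemiring R] [TopologicalSpace R] {h : ℕ → R}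
    {p : ℕ} (hp : p.Prime) : ∑' e : ℕ, squarefreeProd h (p ^ e) = 1 + h p := by
  rw [tsum_eq_sum (s := {0, 1}), Finset.sum_pair zero_ne_one, pow_zero, pow_one,
    squarefreeProd_one, squarefreeProd, if_pos hp.squarefree, hp.primeFactors,
    Finset.prod_singleton]
  intro e he
  have he0 : e ≠ 0 := fun h0 => he (by simp [h0])
  have he1 : e ≠ 1 := fun h1 => he (by simp [h1])
  exact squarefreeProd_of_not_squarefree fun hsq =>
    he1 ((Nat.squarefree_pow_iff hp.ne_one he0).mp hsq).2

theorem hasProd_one_add_squarefreeProd [NormedCommRing R] [CompleteSpace R] {h : ℕ → R}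
    (hs : Summable fun n => ‖squarefreeProd h n‖) :
    HasProd (fun p : Nat.Primes => 1 + h p) (∑' n, squarefreeProd h n) := by
  have hlocal : (fun p : Nat.Primes => ∑' e, squarefreeProd h ((p : ℕ) ^ e)) =
      fun p : Nat.Primes => 1 + h p := funext fun p => tsum_squarefreeProd_prime_pow p.2
  rw [← hlocal]
  exact EulerProduct.eulerProduct_hasProd squarefreeProd_one (fun hmn => squarefreeProd_mul hmn) hs
    squarefreeProd_zero

end SquarefreeProd

theorem hasProd_one_sub_inv_prime_sq :
    HasProd (fun p : Nat.Primes => 1 - ((p : ℝ) ^ 2)⁻¹) (6 / π ^ 2) := by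
  let f : ℕ →*₀ ℝ := (invMonoidWithZeroHom.comp (powMonoidWithZeroHom two_ne_zero)).comp
    (Nat.castRingHom ℝ).toMonoidWithZeroHom
  have hf : ∀ n : ℕ, f n = ((n : ℝ) ^ 2)⁻¹ := fun n => rfl
  have hzeta : HasSum (fun n => f n) (π ^ 2 / 6) := by
    simpa only [hf, one_div] using hasSum_zeta_two
  have hnorm : Summable fun n => ‖f n‖ := by
    simpa only [Real.norm_eq_abs, hf, abs_inv, abs_pow, Nat.abs_cast] using hzeta.summable
  have hprod := EulerProduct.eulerProduct_completely_multiplicative_hasProd hnorm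
  rw [hzeta.tsum_eq] at hprod
  simpa only [inv_inv, inv_div, hf] using hprod.inv₀ (by positivity)

theorem Nat.Prime.sq_sub_two_pos {p : ℕ} (hp : p.Prime) : 0 < (p : ℝ) ^ 2 - 2 := by
  have : (2 : ℝ) ≤ p := by exact_mod_cast hp.two_le
  nlinarith

theorem Nat.Prime.one_sub_two_div_sq_pos {p : ℕ} (hp : p.Prime) : 0 < 1 - 2 / (p : ℝ) ^ 2 := by
  rw [one_sub_div (by positivity [hp.ne_zero])]
  exact _root_.div_pos hp.sq_sub_two_pos (by positivity [hp.ne_zero])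

theorem one_sub_two_div_sq_mul_one_add_inv {p : ℕ} (hp : p.Prime) :
    (1 - 2 / (p : ℝ) ^ 2) * (1 + ((p : ℝ) ^ 2 - 2)⁻¹) = 1 - ((p : ℝ) ^ 2)⁻¹ := by
  have := hp.sq_sub_two_pos.ne'
  have : (p : ℝ) ≠ 0 := by exact_mod_cast hp.ne_zero
  field_simp
  ring

theorem summable_two_div_sq : Summable fun n : ℕ => 2 / (n : ℝ) ^ 2 := by
  simpa only [div_eq_mul_inv] using (Real.summable_nat_pow_inv.mpr one_lt_two).mul_left 2

theorem summable_two_div_sq_subtype (s : Set ℕ) : Summable fun n : s => 2 / (n : ℝ) ^ 2 :=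
  summable_two_div_sq.comp_injective Subtype.val_injective

theorem multipliable_one_sub_two_div_sq (s : Set ℕ) :
    Multipliable fun p : s => 1 - 2 / (p : ℝ) ^ 2 := by
  simpa only [sub_eq_add_neg] using
    Real.multipliable_one_add_of_summable (summable_two_div_sq_subtype s).neg

theorem sigmaSF_one : sigmaSF 1 = ∏' p : Nat.Primes, (1 - 2 / (p : ℝ) ^ 2) := by
  have h := prod_primeFactors_mul_tprod_prime_not_dvd (u := fun p => 1 - 2 / (p : ℝ) ^ 2)
    one_ne_zero (multipliable_one_sub_two_div_sq {p | p.Prime ∧ ¬ p ∣ 1})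
  rw [Nat.primeFactors_one, Finset.prod_empty, one_mul] at h
  rw [sigmaSF, Nat.cast_one, one_pow, div_one, one_mul, ← h]

theorem sigmaSF_one_pos : 0 < sigmaSF 1 := by
  rw [sigmaSF_one]
  refine (tprod_nonneg fun p => p.2.one_sub_two_div_sq_pos.le).lt_of_ne' ?_
  simpa only [sub_eq_add_neg] using
    tprod_one_add_ne_zero_of_summable (f := fun p : Nat.Primes => -(2 / (p : ℝ) ^ 2))
      (fun p => by simpa only [← sub_eq_add_neg] using p.2.one_sub_two_div_sq_pos.ne')
      (by simp only [norm_neg, Real.norm_eq_abs]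
          exact (summable_two_div_sq_subtype {p | p.Prime}).abs)

theorem sigmaSF_le (n : ℕ) : sigmaSF n ≤ 1 / (n : ℝ) ^ 2 :=
  mul_le_of_le_one_right (by positivity) <| tprod_le_of_prod_le' le_rfl fun _ =>
    Finset.prod_le_one (fun p _ => p.2.1.one_sub_two_div_sq_pos.le)
      fun _ _ => sub_le_self _ (by positivity)

noncomputable def sigmaSFWeight : ℕ → ℝ :=
  squarefreeProd fun p => ((p : ℝ) ^ 2 - 2)⁻¹

theorem sigmaSF_eq_mul_sigmaSFWeight {n : ℕ} (hn : Squarefree n) :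
    sigmaSF n = sigmaSF 1 * sigmaSFWeight n := by
  have hsplit := prod_primeFactors_mul_tprod_prime_not_dvd (u := fun p => 1 - 2 / (p : ℝ) ^ 2)
    hn.ne_zero (multipliable_one_sub_two_div_sq {p | p.Prime ∧ ¬ p ∣ n})
  have hsq : (n : ℝ) ^ 2 = ∏ p ∈ n.primeFactors, (p : ℝ) ^ 2 := by
    rw [Finset.prod_pow, ← Nat.cast_prod, Nat.prod_primeFactors_of_squarefree hn]
  have hfactor : ∏ p ∈ n.primeFactors, (1 - 2 / (p : ℝ) ^ 2) =
      (∏ p ∈ n.primeFactors, ((p : ℝ) ^ 2 - 2)) / (n : ℝ) ^ 2 := by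
    rw [hsq, ← Finset.prod_div_distrib]
    exact Finset.prod_congr rfl fun p hp =>
      one_sub_div (by positivity [(Nat.prime_of_mem_primeFactors hp).ne_zero])
  have hprod : ∏ p ∈ n.primeFactors, ((p : ℝ) ^ 2 - 2) ≠ 0 :=
    Finset.prod_ne_zero_iff.mpr fun p hp => (Nat.prime_of_mem_primeFactors hp).sq_sub_two_pos.ne'
  have hn2 : (n : ℝ) ^ 2 ≠ 0 := by positivity [hn.ne_zero]
  rw [sigmaSFWeight, squarefreeProd, if_pos hn, Finset.prod_inv_distrib, sigmaSF_one, ← hsplit,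
    hfactor, sigmaSF]
  field_simp

theorem sigmaSFWeight_nonneg (n : ℕ) : 0 ≤ sigmaSFWeight n :=
  squarefreeProd_nonneg (fun _ hp => (inv_pos.mpr hp.sq_sub_two_pos).le) n

theorem summable_sigmaSFWeight : Summable sigmaSFWeight := by
  refine .of_nonneg_of_le sigmaSFWeight_nonneg (fun n => ?_)
    ((summable_one_div_nat_pow.mpr one_lt_two).mul_left (sigmaSF 1)⁻¹)
  by_cases hn : Squarefree n
  · rw [le_inv_mul_iff₀ sigmaSF_one_pos, ← sigmaSF_eq_mul_sigmaSFWeight hn]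
    exact sigmaSF_le n
  · rw [sigmaSFWeight, squarefreeProd_of_not_squarefree hn]
    exact mul_nonneg (inv_nonneg.mpr sigmaSF_one_pos.le) (by positivity)

theorem sigmaSF_one_mul_tsum_sigmaSFWeight :
    sigmaSF 1 * ∑' n, sigmaSFWeight n = 6 / π ^ 2 := by
  have hC : HasProd (fun p : Nat.Primes => 1 - 2 / (p : ℝ) ^ 2) (sigmaSF 1) :=
    sigmaSF_one ▸ (multipliable_one_sub_two_div_sq {p | p.Prime}).hasProd
  refine HasProd.unique ?_ hasProd_one_sub_inv_prime_sq
  exact (hC.mul (hasProd_one_add_squarefreeProd summable_sigmaSFWeight.norm)).congr_fun fun p =>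
    (one_sub_two_div_sq_mul_one_add_inv p.2).symm

theorem hasSum_sigmaSF_s5 : HasSum (fun d : {d : ℕ // Squarefree d} => sigmaSF d) (6 / π ^ 2) := by
  have hsum : HasSum (fun n => sigmaSF 1 * sigmaSFWeight n) (6 / π ^ 2) :=
    sigmaSF_one_mul_tsum_sigmaSFWeight ▸ summable_sigmaSFWeight.hasSum.mul_left _
  have hsupp : Function.support (fun n => sigmaSF 1 * sigmaSFWeight n) ⊆ {d | Squarefree d} :=
    Function.support_subset_iff'.mpr fun n hn => by
      rw [sigmaSFWeight, squarefreeProd_of_not_squarefree hn, mul_zero]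
  exact ((hasSum_subtype_iff_of_support_subset hsupp).mpr hsum).congr_fun fun d =>
    sigmaSF_eq_mul_sigmaSFWeight d.2

/-- The series `Σ_{d square-free} σ_d` converges absolutely and equals `6/π²`. -/
theorem hasSum_sigmaSF_total :
    Summable (fun d : {d : ℕ // Squarefree d} => |sigmaSF d|)
    ∧ HasSum (fun d : {d : ℕ // Squarefree d} => sigmaSF d) (6 / Real.pi ^ 2) :=
  ⟨hasSum_sigmaSF_s5.summable.abs, hasSum_sigmaSF_s5⟩
end

section
/- Let 𝔾 = ∏_{p prime} ℤ/p²ℤ be the compact abelian group with the product topology, let ℙ be its Haar probability measure, and let u ∈ 𝔾 be the element all of whose coordinates equal 1. A complex number λ is an eigenvalue of the Koopman operator of the translation T_u(g) = g + u on L²(𝔾, ℙ) — i.e., there exists a measurable f : 𝔾 → ℂ with ∫ |f|² dℙ < ∞, f not ℙ-almost everywhere zero, and f(g + u) = λ·f(g) for ℙ-almost every g — if and only if λ = e(l/d²) for some square-free positive integer d and some integer l with 0 ≤ l ≤ d²−1 and gcd(l, d²) square-free (with the convention gcd(0, d²) = d²). -/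
open MeasureTheory

/-- Each finite coordinate group `ℤ/nℤ` carries the discrete (⊤) σ-algebra. -/
instance (n : ℕ) : MeasurableSpace (ZMod n) := ⊤

/-- The compact abelian group `𝔾 = ∏_{p prime} ℤ/p²ℤ`, with the product σ-algebra
(which is the Borel σ-algebra of the product topology). -/
abbrev SqFreeGroup : Type := ∀ p : {p : ℕ // p.Prime}, ZMod ((p : ℕ) ^ 2)

/-!
Conditioning an eigenfunction `f` on the coordinates at the primes `p ≤ n` commutes with the
translation by `u`, so it yields again an eigenfunction for the same eigenvalue `λ`, and by the
martingale convergence theorem it is nonzero for `n` large. This conditioned eigenfunction only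
depends on finitely many coordinates, hence is invariant under translation by `(n#)² • u`;
therefore `λ ^ (n#)² = 1`. Writing such a root of unity in lowest terms `k / m`, the denominator
`m` divides the square of a squarefree number, and `k / m = l / r²` with `r = gcd(m, n#)`.
Conversely, `x ↦ e(l x / d²)` composed with the Chinese remainder map `𝔾 → ℤ/d²ℤ` is an
eigenfunction with eigenvalue `e(l / d²)`.
-/

open Filter Complex

namespace MeasureTheory

variable {Ω : Type*} {m m₀ : MeasurableSpace Ω} {μ : Measure Ω}

def IsKoopmanEigenfunction (μ : Measure Ω) (T : Ω → Ω) (c : ℂ) (f : Ω → ℂ) : Prop :=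
  Measurable f ∧ Integrable (fun x => ‖f x‖ ^ 2) μ ∧ ¬ f =ᵐ[μ] 0 ∧ ∀ᵐ x ∂μ, f (T x) = c * f x

theorem IsKoopmanEigenfunction.integrable [IsFiniteMeasure μ] {T : Ω → Ω} {c : ℂ} {f : Ω → ℂ}
    (hf : IsKoopmanEigenfunction μ T c f) : Integrable f μ :=
  ((memLp_two_iff_integrable_sq_norm hf.1.aestronglyMeasurable).mpr hf.2.1).integrable one_le_two

theorem _root_.AddChar.isKoopmanEigenfunction {G : Type*} [AddMonoid G] [MeasurableSpace G]
    {μ : Measure G} [IsFiniteMeasure μ] [NeZero μ] (ψ : AddChar G ℂ) (hψ : Measurable ψ)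
    (hψ1 : ∀ x, ‖ψ x‖ = 1) (u : G) : IsKoopmanEigenfunction μ (· + u) (ψ u) ψ := by
  refine ⟨hψ, by simp [hψ1], fun h => ?_, Eventually.of_forall fun x => ?_⟩
  · obtain ⟨x, hx⟩ := h.exists
    simpa [hx] using hψ1 x
  · rw [AddChar.map_add_eq_mul, mul_comm]

theorem condExp_comp_measurableEquiv {Ω' E : Type*} [NormedAddCommGroup E] [NormedSpace ℝ E]
    [CompleteSpace E] {m' m₀' : MeasurableSpace Ω'} {ν : Measure Ω'} (e : Ω ≃ᵐ Ω')
    (he : MeasurePreserving e μ ν) (hm : m ≤ m₀) (hm' : m' ≤ m₀') [SigmaFinite (μ.trim hm)]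
    [SigmaFinite (ν.trim hm')] (hem : Measurable[m, m'] e) (hem' : Measurable[m', m] e.symm)
    {f : Ω' → E} (hf : Integrable f ν) :
    ν[f|m'] ∘ e =ᵐ[μ] μ[f ∘ e|m] := by
  have hint {g : Ω' → E} (hg : Integrable g ν) : Integrable (g ∘ e) μ :=
    (he.integrable_comp_emb e.measurableEmbedding).mpr hg
  refine ae_eq_condExp_of_forall_setIntegral_eq hm (hint hf)
    (fun s _ _ => (hint integrable_condExp).integrableOn) (fun s hs _ => ?_)
    (stronglyMeasurable_condExp.comp_measurable hem).aestronglyMeasurable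
  have hs' : s = e ⁻¹' (e.symm ⁻¹' s) := by simp [Set.preimage_preimage]
  rw [hs']
  simp only [Function.comp_apply, he.setIntegral_preimage_emb e.measurableEmbedding]
  exact setIntegral_condExp hm' hf (hem' hs)

theorem ae_eq_zero_of_forall_condExp_ae_eq_zero [IsFiniteMeasure μ] {ℱ : Filtration ℕ m₀}
    {g : Ω → ℝ} (hg : Integrable g μ) (hgm : StronglyMeasurable[⨆ n, ℱ n] g)
    (h : ∀ n, μ[g|ℱ n] =ᵐ[μ] 0) : g =ᵐ[μ] 0 := by
  have hconst : ∀ n, eLpNorm (μ[g|ℱ n] - g) 1 μ = eLpNorm g 1 μ := fun n => by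
    rw [← eLpNorm_neg g]
    exact eLpNorm_congr_ae (by filter_upwards [h n] with x hx; simp [hx])
  have hlim := hg.tendsto_eLpNorm_condExp hgm
  simp only [hconst, tendsto_const_nhds_iff] at hlim
  exact (eLpNorm_eq_zero_iff hg.aestronglyMeasurable one_ne_zero).mp hlim

theorem exists_condExp_not_ae_eq_zero {𝕜 : Type*} [RCLike 𝕜] [IsFiniteMeasure μ]
    {ℱ : Filtration ℕ m₀} {f : Ω → 𝕜} (hf : Integrable f μ)
    (hfm : StronglyMeasurable[⨆ n, ℱ n] f) (hne : ¬ f =ᵐ[μ] 0) :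
    ∃ n, ¬ μ[f|ℱ n] =ᵐ[μ] 0 := by
  contrapose! hne with h
  have hT (T : 𝕜 →L[ℝ] ℝ) : T ∘ f =ᵐ[μ] 0 :=
    ae_eq_zero_of_forall_condExp_ae_eq_zero (T.integrable_comp hf)
      (T.continuous.comp_stronglyMeasurable hfm) fun n =>
        (T.comp_condExp_comm hf).symm.trans (by filter_upwards [h n] with x hx; simp [hx])
  filter_upwards [hT RCLike.reCLM, hT RCLike.imCLM] with x hre him
  exact RCLike.ext (by simpa using hre) (by simpa using him)

theorem pow_eq_one_of_comp_iterate_eq {K : Type*} [Field K] {T : Ω → Ω}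
    (hT : Measure.QuasiMeasurePreserving T μ μ) {g : Ω → K} {c : K} (hg : g ∘ T =ᵐ[μ] c • g)
    (hne : ¬ g =ᵐ[μ] 0) {N : ℕ} (hper : g ∘ T^[N] = g) : c ^ N = 1 := by
  have hiter : ∀ k : ℕ, g ∘ T^[k] =ᵐ[μ] c ^ k • g := by
    intro k
    induction k with
    | zero => simp
    | succ k ih =>
      filter_upwards [hT.ae_eq_comp ih, hg] with x hk h1
      simp only [Function.comp_apply, Function.iterate_succ_apply, Pi.smul_apply, smul_eq_mul]
        at hk h1 ⊢
      rw [hk, h1, pow_succ, mul_assoc]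
  contrapose! hne with hc
  filter_upwards [hiter N] with x hx
  rw [hper, Pi.smul_apply, smul_eq_mul] at hx
  have h0 : (1 - c ^ N) * g x = 0 := by rw [sub_mul, one_mul, ← hx, sub_self]
  exact (mul_eq_zero.mp h0).resolve_left (sub_ne_zero.mpr hc.symm)

def Filtration.comp {ι κ : Type*} [Preorder ι] [Preorder κ] (ℱ : Filtration ι m₀) {φ : κ → ι}
    (hφ : Monotone φ) : Filtration κ m₀ where
  seq := ℱ ∘ φ
  mono' _ _ h := ℱ.mono (hφ h)
  le' k := ℱ.le (φ k)

section Product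

variable {ι : Type*} {X : ι → Type*} [∀ i, MeasurableSpace (X i)]

theorem Filtration.iSup_piFinset_comp {s : ℕ → Finset ι} (hs : Monotone s)
    (hexh : ∀ i, ∃ n, i ∈ s n) :
    ⨆ n, (piFinset.comp hs : Filtration ℕ (MeasurableSpace.pi : MeasurableSpace (Π i, X i))) n
      = MeasurableSpace.pi := by
  refine le_antisymm (iSup_le fun n => Filtration.le _ n) (iSup_le fun i => ?_)
  obtain ⟨n, hn⟩ := hexh i
  have : Measurable[piFinset (s n)] fun x : Π i, X i => x i :=
    (measurable_pi_apply (⟨i, hn⟩ : s n)).comp (comap_measurable (s n).restrict)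
  exact this.comap_le.trans (le_iSup (fun n => piFinset (s n)) n)

theorem Filtration.measurable_piFinset_add_const [∀ i, Add (X i)] [∀ i, MeasurableAdd (X i)]
    (s : Finset ι) (v : Π i, X i) : Measurable[piFinset s, piFinset s] (· + v) :=
  measurable_comap_iff.mpr <| (measurable_add_const (s.restrict v)).comp (comap_measurable _)

theorem IsKoopmanEigenfunction.exists_forall_pow_eq_one [∀ i, AddGroup (X i)]
    [∀ i, MeasurableAdd (X i)] {μ : Measure (Π i, X i)} [IsFiniteMeasure μ] {u : Π i, X i}
    (hu : MeasurePreserving (· + u) μ μ) {s : ℕ → Finset ι} (hs : Monotone s)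
    (hexh : ∀ i, ∃ n, i ∈ s n) {c : ℂ} {f : (Π i, X i) → ℂ}
    (hf : IsKoopmanEigenfunction μ (· + u) c f) :
    ∃ n, ∀ N : ℕ, (∀ i ∈ s n, N • u i = 0) → c ^ N = 1 := by
  let ℱ : Filtration ℕ (MeasurableSpace.pi : MeasurableSpace (Π i, X i)) :=
    Filtration.piFinset.comp hs
  have hfm : StronglyMeasurable[⨆ n, ℱ n] f := by
    rw [Filtration.iSup_piFinset_comp hs hexh]
    exact hf.1.stronglyMeasurable
  obtain ⟨n, hn⟩ := exists_condExp_not_ae_eq_zero hf.integrable hfm hf.2.2.1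
  refine ⟨n, fun N hN => pow_eq_one_of_comp_iterate_eq hu.quasiMeasurePreserving ?_ hn ?_⟩
  · have hsymm : Measurable[ℱ n, ℱ n] (MeasurableEquiv.addRight u).symm := by
      rw [MeasurableEquiv.symm_addRight, MeasurableEquiv.coe_addRight]
      exact Filtration.measurable_piFinset_add_const (s n) (-u)
    have heig : f ∘ (· + u) =ᵐ[μ] c • f := hf.2.2.2
    exact (condExp_comp_measurableEquiv (MeasurableEquiv.addRight u) hu (ℱ.le n) (ℱ.le n)
      (Filtration.measurable_piFinset_add_const (s n) u) hsymm hf.integrable).trans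
      ((condExp_congr_ae heig).trans (condExp_smul c f _))
  · funext x
    rw [Function.comp_apply, add_right_iterate_apply]
    have hdep : DependsOn (μ[f|ℱ n]) (s n) :=
      StronglyMeasurable.dependsOn_of_piFinset (X := X) stronglyMeasurable_condExp
    exact hdep fun i hi => by simp [hN i hi]

end Product

end MeasureTheory

theorem Nat.exists_squarefree_sq_denominator {d m k : ℕ} (hd : Squarefree d) (hm : m ∣ d ^ 2)
    (hkm : k < m) (hk : k.Coprime m) :
    ∃ r l : ℕ, Squarefree r ∧ l < r ^ 2 ∧ Squarefree (l.gcd (r ^ 2)) ∧ l * m = k * r ^ 2 := by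
  set r := m.gcd d
  have hr : Squarefree r := hd.squarefree_of_dvd (Nat.gcd_dvd_right m d)
  obtain ⟨c, hc⟩ : m ∣ r ^ 2 := by
    rw [← Nat.pow_gcd_pow]
    exact Nat.dvd_gcd (dvd_pow_self m two_ne_zero) hm
  have hcr : c ∣ r := by
    obtain ⟨t, ht⟩ := Nat.gcd_dvd_left m d
    refine ⟨t, Nat.eq_of_mul_eq_mul_left (Nat.pos_of_ne_zero hr.ne_zero) ?_⟩
    calc r * r = r * t * c := by rw [← ht, ← hc, sq]
      _ = r * (c * t) := by ring
  have hc0 : 0 < c := Nat.pos_of_ne_zero <| by rintro rfl; simp [hr.ne_zero] at hc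
  refine ⟨r, k * c, hr, ?_, ?_, ?_⟩
  · rw [hc]
    exact Nat.mul_lt_mul_of_pos_right hkm hc0
  · rw [hc, Nat.gcd_mul_right, hk, one_mul]
    exact hr.squarefree_of_dvd hcr
  · rw [hc]
    ring

theorem Squarefree.natFactorization_sq_le_two {d : ℕ} (hd : Squarefree d) (p : ℕ) :
    (d ^ 2).factorization p ≤ 2 := by
  rw [Nat.factorization_pow]
  simpa using Nat.mul_le_mul_left 2 (hd.natFactorization_le_one p)

theorem exists_eq_exp_of_pow_sq_eq_one {ζ : ℂ} {d : ℕ} (hd : Squarefree d) (h : ζ ^ d ^ 2 = 1) :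
    ∃ r l : ℕ, Squarefree r ∧ l < r ^ 2 ∧ Squarefree (l.gcd (r ^ 2)) ∧
      ζ = exp (2 * Real.pi * I * ((l : ℂ) / (r : ℂ) ^ 2)) := by
  have hm : orderOf ζ ∣ d ^ 2 := orderOf_dvd_of_pow_eq_one h
  have hm0 : orderOf ζ ≠ 0 := ne_zero_of_dvd_ne_zero (pow_ne_zero 2 hd.ne_zero) hm
  obtain ⟨k, hkm, hk, hζ⟩ := (isPrimitiveRoot_iff ζ _ hm0).mp (IsPrimitiveRoot.orderOf ζ)
  obtain ⟨r, l, hr, hl, hgcd, hlk⟩ := Nat.exists_squarefree_sq_denominator hd hm hkm hk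
  refine ⟨r, l, hr, hl, hgcd, ?_⟩
  rw [← hζ]
  congr 2
  rw [div_eq_div_iff (by exact_mod_cast hm0) (by exact_mod_cast pow_ne_zero 2 hr.ne_zero)]
  exact_mod_cast hlk.symm

instance (n : ℕ) : Countable (ZMod n) := by
  cases n <;> dsimp [ZMod] <;> infer_instance

namespace SqFreeGroup

theorem exists_squarefree_pow_sq_eq_one {P : Measure SqFreeGroup} [IsFiniteMeasure P]
    (hu : MeasurePreserving (· + 1) P P) {c : ℂ} {f : SqFreeGroup → ℂ}
    (hf : IsKoopmanEigenfunction P (· + 1) c f) : ∃ d, Squarefree d ∧ c ^ d ^ 2 = 1 := by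
  let s (n : ℕ) : Finset {p : ℕ // p.Prime} := (Finset.Iic n).subtype Nat.Prime
  have hs : Monotone s := fun _ _ h => Finset.subtype_mono (Finset.Iic_subset_Iic.mpr h)
  obtain ⟨n, hn⟩ := hf.exists_forall_pow_eq_one hu hs fun p => ⟨p, by simp [s]⟩
  refine ⟨primorial n, squarefree_primorial n, hn _ fun p hp => ?_⟩
  rw [Pi.one_apply, nsmul_eq_mul, mul_one, ZMod.natCast_eq_zero_iff]
  have hpn : (p : ℕ) ≤ n := by simpa [s] using hp
  exact pow_dvd_pow_of_dvd (p.2.dvd_primorial_iff.mpr hpn) 2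

noncomputable def toZModSq {d : ℕ} (hd : Squarefree d) : SqFreeGroup →+* ZMod (d ^ 2) :=
  (ZMod.equivPi _ (pow_ne_zero 2 hd.ne_zero)).symm.toRingHom.comp <| RingHom.pi fun p =>
    (ZMod.castHom (pow_dvd_pow (p : ℕ) (hd.natFactorization_sq_le_two p)) _).comp
      (Pi.evalRingHom _ (⟨p, Nat.prime_of_mem_primeFactors p.2⟩ : {p : ℕ // p.Prime}))

theorem measurable_toZModSq {d : ℕ} (hd : Squarefree d) : Measurable (toZModSq hd) :=
  (measurable_of_countable (ZMod.equivPi _ (pow_ne_zero 2 hd.ne_zero)).symm).comp <|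
    measurable_pi_lambda _ fun _ => measurable_from_top.comp (measurable_pi_apply _)

theorem exists_isKoopmanEigenfunction_exp (P : Measure SqFreeGroup) [IsProbabilityMeasure P] {d : ℕ}
    (hd : Squarefree d) (l : ℕ) :
    ∃ f, IsKoopmanEigenfunction P (· + 1)
      (exp (2 * Real.pi * I * ((l : ℂ) / (d : ℂ) ^ 2))) f := by
  have : NeZero (d ^ 2) := ⟨pow_ne_zero 2 hd.ne_zero⟩
  let ψ : AddChar SqFreeGroup ℂ := ZMod.stdAddChar.compAddMonoidHom
    ((AddMonoidHom.mulLeft (l : ZMod (d ^ 2))).comp (toZModSq hd).toAddMonoidHom)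
  have hψ : ψ 1 = exp (2 * Real.pi * I * ((l : ℂ) / (d : ℂ) ^ 2)) := by
    have h := ZMod.stdAddChar_coe (N := d ^ 2) (l : ℤ)
    push_cast at h
    simpa [ψ, mul_div_assoc] using h
  refine ⟨ψ, hψ ▸ ψ.isKoopmanEigenfunction ?_ (fun x => ?_) 1⟩
  · simp only [ψ, AddChar.coe_compAddMonoidHom, AddMonoidHom.coe_comp,
      RingHom.toAddMonoidHom_eq_coe, AddMonoidHom.coe_coe]
    exact measurable_from_top.comp (measurable_from_top.comp (measurable_toZModSq hd))
  · simp [ψ, ZMod.stdAddChar_apply, Circle.norm_coe]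

end SqFreeGroup

/-- Let `ℙ` be the Haar probability measure on `𝔾` (equivalently, by uniqueness of
Haar measure on this compact group: a translation-invariant probability measure).
A complex number `λ` is an eigenvalue of the Koopman operator of the translation
`g ↦ g + u`, `u = (1,1,1,…)`, on `L²(𝔾, ℙ)` if and only if `λ = e(l/d²)` for some
square-free `d ≥ 1` and `0 ≤ l ≤ d²−1` with `gcd(l, d²)` square-free. -/
theorem koopman_eigenvalue_iff
    (P : Measure SqFreeGroup) (hprob : IsProbabilityMeasure P)
    (hinv : ∀ h : SqFreeGroup, MeasurePreserving (fun g => g + h) P P)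
    (lam : ℂ) :
    (∃ f : SqFreeGroup → ℂ, Measurable f ∧
        Integrable (fun g => ‖f g‖ ^ 2) P ∧
        ¬ (f =ᵐ[P] 0) ∧
        ∀ᵐ g ∂P, f (g + fun _ => 1) = lam * f g) ↔
    (∃ d l : ℕ, Squarefree d ∧ l < d ^ 2 ∧ Squarefree (Nat.gcd l (d ^ 2)) ∧
        lam = Complex.exp (2 * Real.pi * Complex.I * ((l : ℂ) / (d : ℂ) ^ 2))) := by
  constructor
  · rintro ⟨f, hf⟩
    obtain ⟨d, hd, hlam⟩ := SqFreeGroup.exists_squarefree_pow_sq_eq_one (hinv 1) hf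
    exact exists_eq_exp_of_pow_sq_eq_one hd hlam
  · rintro ⟨d, l, hd, -, -, rfl⟩
    exact SqFreeGroup.exists_isKoopmanEigenfunction_exp P hd l
end
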